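/- Let P^{U0}_2 denote the distribution on X_2 that assigns probability 0 to the symbol 0 and probability 1/(r_2−1) to each nonzero symbol. For the product input distribution P(x_1,x_2) = 1{x_1 = 1}·P^{U0}_2(x_2), the rate pair R*_6 is attained: I_P(X_1;Y_2|X_2) = 0 and I_P(X_2;Y_1|X_1) = C_{2,1}. -/
import Mathlib


open Real BigOperators Finset

/-- Entropy of a finite probability vector, with the convention `0 * log 0 = 0`
(automatic since `Real.log 0 = 0`). -/
noncomputable def ent {n : ℕ} (p : Fin n → ℝ) : ℝ := -∑ y, p y * Real.log (p y)

/-- `Q` is a probability distribution on `Fin n`. -/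
def IsProbDist {n : ℕ} (Q : Fin n → ℝ) : Prop := (∀ x, 0 ≤ Q x) ∧ ∑ x, Q x = 1

/-- `P` is a joint probability distribution. -/
def IsJointProbDist {m n : ℕ} (P : Fin m → Fin n → ℝ) : Prop :=
  (∀ x1 x2, 0 ≤ P x1 x2) ∧ ∑ x1, ∑ x2, P x1 x2 = 1

/-- First marginal `P_1`. -/
noncomputable def marg1 {m n : ℕ} (P : Fin m → Fin n → ℝ) (x1 : Fin m) : ℝ := ∑ x2, P x1 x2

/-- Second marginal `P_2`. -/
noncomputable def marg2 {m n : ℕ} (P : Fin m → Fin n → ℝ) (x2 : Fin n) : ℝ := ∑ x1, P x1 x2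

/-- Conditional mutual information `I_P(X₁;Y₂|X₂)`; terms with
`P x1 x2 * W2 x1 x2 y2 = 0` vanish, and summands with `marg2 P x2 = 0` vanish
since then `P x1 x2 = 0`. -/
noncomputable def condMI1 {m n t : ℕ} (P : Fin m → Fin n → ℝ)
    (W2 : Fin m → Fin n → Fin t → ℝ) : ℝ :=
  ∑ x2, ∑ x1, ∑ y2, P x1 x2 * W2 x1 x2 y2 *
    Real.log (W2 x1 x2 y2 / ((∑ x1', P x1' x2 * W2 x1' x2 y2) / marg2 P x2))

/-- Conditional mutual information `I_P(X₂;Y₁|X₁)`. -/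
noncomputable def condMI2 {m n t : ℕ} (P : Fin m → Fin n → ℝ)
    (W1 : Fin m → Fin n → Fin t → ℝ) : ℝ :=
  ∑ x1, ∑ x2, ∑ y1, P x1 x2 * W1 x1 x2 y1 *
    Real.log (W1 x1 x2 y1 / ((∑ x2', P x1 x2' * W1 x1 x2' y1) / marg1 P x1))

/-- Structural assumptions of a generalized push-to-talk two-way channel with
input alphabets `Fin (r1+3)`, `Fin (r2+3)` and output alphabets `Fin (s1+2)`,
`Fin (s2+2)`: both marginal channels are transition matrices; the row of
input `0` of each user is uniform; for each state, the nonzero-input rows are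
permutations of the row of input `1` and have constant column sums
(weak symmetry). -/
def GenPTT {r1 r2 s1 s2 : ℕ} (W1 : Fin (r1 + 3) → Fin (r2 + 3) → Fin (s1 + 2) → ℝ)
    (W2 : Fin (r1 + 3) → Fin (r2 + 3) → Fin (s2 + 2) → ℝ) : Prop :=
  (∀ x1 x2 y1, 0 ≤ W1 x1 x2 y1) ∧ (∀ x1 x2 y2, 0 ≤ W2 x1 x2 y2) ∧
  (∀ x1 x2, ∑ y1, W1 x1 x2 y1 = 1) ∧ (∀ x1 x2, ∑ y2, W2 x1 x2 y2 = 1) ∧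
  (∀ x2 y2, W2 0 x2 y2 = 1 / ((s2 : ℝ) + 2)) ∧
  (∀ x2, ∀ x1 : Fin (r1 + 3), x1 ≠ 0 →
    ∃ σ : Equiv.Perm (Fin (s2 + 2)), ∀ y2, W2 x1 x2 y2 = W2 1 x2 (σ y2)) ∧
  (∀ x2, ∀ y2 y2' : Fin (s2 + 2),
    ∑ x1 ∈ Finset.univ.filter (fun x1 => x1 ≠ (0 : Fin (r1 + 3))), W2 x1 x2 y2 =
    ∑ x1 ∈ Finset.univ.filter (fun x1 => x1 ≠ (0 : Fin (r1 + 3))), W2 x1 x2 y2') ∧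
  (∀ x1 y1, W1 x1 0 y1 = 1 / ((s1 : ℝ) + 2)) ∧
  (∀ x1, ∀ x2 : Fin (r2 + 3), x2 ≠ 0 →
    ∃ σ : Equiv.Perm (Fin (s1 + 2)), ∀ y1, W1 x1 x2 y1 = W1 x1 1 (σ y1)) ∧
  (∀ x1, ∀ y1 y1' : Fin (s1 + 2),
    ∑ x2 ∈ Finset.univ.filter (fun x2 => x2 ≠ (0 : Fin (r2 + 3))), W1 x1 x2 y1 =
    ∑ x2 ∈ Finset.univ.filter (fun x2 => x2 ≠ (0 : Fin (r2 + 3))), W1 x1 x2 y1')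

/-- `C_{1,x₂} = log s₂ − H(row of input 1 of Q_{1,x₂})`. -/
noncomputable def C1 {r1 r2 s2 : ℕ} (W2 : Fin (r1 + 3) → Fin (r2 + 3) → Fin (s2 + 2) → ℝ)
    (x2 : Fin (r2 + 3)) : ℝ := Real.log ((s2 : ℝ) + 2) - ent (fun y2 => W2 1 x2 y2)

/-- `C_{2,x₁} = log s₁ − H(row of input 1 of Q_{2,x₁})`. -/
noncomputable def C2 {r1 r2 s1 : ℕ} (W1 : Fin (r1 + 3) → Fin (r2 + 3) → Fin (s1 + 2) → ℝ)
    (x1 : Fin (r1 + 3)) : ℝ := Real.log ((s1 : ℝ) + 2) - ent (fun y1 => W1 x1 1 y1)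

/-- The channel symmetry property: `C_{1,x₂} = C_{1,1}` for all `x₂ ≠ 0` and
`C_{2,x₁} = C_{2,1}` for all `x₁ ≠ 0`. -/
def SymProp {r1 r2 s1 s2 : ℕ} (W1 : Fin (r1 + 3) → Fin (r2 + 3) → Fin (s1 + 2) → ℝ)
    (W2 : Fin (r1 + 3) → Fin (r2 + 3) → Fin (s2 + 2) → ℝ) : Prop :=
  (∀ x2 : Fin (r2 + 3), x2 ≠ 0 → C1 W2 x2 = C1 W2 1) ∧
  (∀ x1 : Fin (r1 + 3), x1 ≠ 0 → C2 W1 x1 = C2 W1 1)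

/-- The rate pair `R*₆ = (0, C₂₁)` is attained by `1{x₁ = 1} × P^{U0}₂`. -/
theorem stmt16 (r1 r2 s1 s2 : ℕ)
    (W1 : Fin (r1 + 3) → Fin (r2 + 3) → Fin (s1 + 2) → ℝ)
    (W2 : Fin (r1 + 3) → Fin (r2 + 3) → Fin (s2 + 2) → ℝ)
    (hW : GenPTT W1 W2) (hSym : SymProp W1 W2) :
    condMI1 (fun x1 x2 => (if x1 = 1 then (1 : ℝ) else 0) *
        (if x2 = 0 then (0 : ℝ) else ((r2 : ℝ) + 2)⁻¹)) W2 = 0 ∧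
    condMI2 (fun x1 x2 => (if x1 = 1 then (1 : ℝ) else 0) *
        (if x2 = 0 then (0 : ℝ) else ((r2 : ℝ) + 2)⁻¹)) W1 = C2 W1 1 := by
  obtain ⟨hW1nn, hW2nn, hW1sum, hW2sum, hW2unif, hW2perm, hW2col, hW1unif, hW1perm, hW1col⟩ := hW
  set P : Fin (r1+3) → Fin (r2+3) → ℝ := fun x1 x2 => (if x1 = 1 then (1:ℝ) else 0) *
      (if x2 = 0 then (0:ℝ) else ((r2:ℝ)+2)⁻¹) with hP
  have hc : (0:ℝ) < ((r2:ℝ)+2)⁻¹ := by positivity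
  have hmarg2 : ∀ x2, marg2 P x2 = if x2 = 0 then (0:ℝ) else ((r2:ℝ)+2)⁻¹ := by
    intro x2
    unfold marg2
    rw [Finset.sum_eq_single (1 : Fin (r1+3))]
    · simp [hP]
    · intro b _ hb; simp [hP, hb]
    · simp
  have hmarg1 : marg1 P 1 = 1 := by
    unfold marg1
    have h1 : ∀ x2 : Fin (r2+3), P 1 x2 =
        ((r2:ℝ)+2)⁻¹ - (if x2 = 0 then ((r2:ℝ)+2)⁻¹ else 0) := by
      intro x2; by_cases h : x2 = 0 <;> simp [hP, h]
    rw [Finset.sum_congr rfl fun x2 _ => h1 x2, Finset.sum_sub_distrib, Finset.sum_const,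
      Finset.sum_ite_eq' Finset.univ (0 : Fin (r2+3)) (fun _ => ((r2:ℝ)+2)⁻¹)]
    simp only [Finset.card_univ, Fintype.card_fin, Finset.mem_univ, if_pos, nsmul_eq_mul]
    push_cast
    field_simp
    ring
  constructor
  · -- condMI1 = 0
    unfold condMI1
    apply Finset.sum_eq_zero; intro x2 _
    apply Finset.sum_eq_zero; intro x1 _
    apply Finset.sum_eq_zero; intro y2 _
    by_cases hx1 : x1 = 1
    · subst hx1
      by_cases hx2 : x2 = 0
      · simp [hP, hx2]
      · have hPv : P 1 x2 = ((r2:ℝ)+2)⁻¹ := by simp [hP, hx2]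
        have hsum : (∑ x1', P x1' x2 * W2 x1' x2 y2) = ((r2:ℝ)+2)⁻¹ * W2 1 x2 y2 := by
          rw [Finset.sum_eq_single (1 : Fin (r1+3))]
          · rw [hPv]
          · intro b _ hb; simp [hP, hb]
          · simp
        rw [hsum, hmarg2 x2, if_neg hx2]
        by_cases hw : W2 1 x2 y2 = 0
        · simp [hw]
        · rw [mul_div_cancel_left₀ _ (ne_of_gt hc), div_self hw, Real.log_one, mul_zero]
    · simp [hP, hx1]
  · -- condMI2 = C2
    have hS : ∀ y1 : Fin (s1+2),
        ∑ x2 ∈ Finset.univ.filter (fun x2 => x2 ≠ (0 : Fin (r2+3))), W1 1 x2 y1 =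
        ((r2:ℝ)+2) / ((s1:ℝ)+2) := by
      intro y1
      have hcard : (Finset.univ.filter (fun x2 => x2 ≠ (0 : Fin (r2+3)))).card = r2+2 := by
        rw [Finset.filter_ne']
        simp
      have htot : ∑ y1' : Fin (s1+2),
          ∑ x2 ∈ Finset.univ.filter (fun x2 => x2 ≠ (0 : Fin (r2+3))), W1 1 x2 y1' =
          (r2:ℝ)+2 := by
        rw [Finset.sum_comm, Finset.sum_congr rfl (fun x2 _ => hW1sum 1 x2),
          Finset.sum_const, hcard]
        push_cast
        ring
      have hconst : ∑ y1' : Fin (s1+2),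
          ∑ x2 ∈ Finset.univ.filter (fun x2 => x2 ≠ (0 : Fin (r2+3))), W1 1 x2 y1' =
          ((s1:ℝ)+2) * (∑ x2 ∈ Finset.univ.filter (fun x2 => x2 ≠ (0 : Fin (r2+3))), W1 1 x2 y1) := by
        rw [Finset.sum_congr rfl (fun y1' _ => hW1col 1 y1' y1), Finset.sum_const]
        simp only [Finset.card_univ, Fintype.card_fin, nsmul_eq_mul]
        push_cast
        ring
      have hs1 : ((s1:ℝ)+2) ≠ 0 := by positivity
      field_simp
      rw [hconst] at htot
      linarith [htot]
    have hden : ∀ y1, (∑ x2', P 1 x2' * W1 1 x2' y1) = ((s1:ℝ)+2)⁻¹ := by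
      intro y1
      have heq : (∑ x2' : Fin (r2+3), P 1 x2' * W1 1 x2' y1) =
          ∑ x2' ∈ Finset.univ.filter (fun x2 => x2 ≠ (0 : Fin (r2+3))),
            ((r2:ℝ)+2)⁻¹ * W1 1 x2' y1 := by
        rw [Finset.sum_filter]
        apply Finset.sum_congr rfl
        intro x2' _
        by_cases h : x2' = 0 <;> simp [hP, h]
      rw [heq, ← Finset.mul_sum, hS y1]
      field_simp
    have hrow : ∀ x2 : Fin (r2+3), x2 ≠ 0 →
        ∑ y1, W1 1 x2 y1 * Real.log (W1 1 x2 y1 * ((s1:ℝ)+2)) = C2 W1 1 := by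
      intro x2 hx2
      obtain ⟨σ, hσ⟩ := hW1perm 1 x2 hx2
      have hent : ∑ y1, W1 1 x2 y1 * Real.log (W1 1 x2 y1) =
          ∑ y1, W1 1 1 y1 * Real.log (W1 1 1 y1) := by
        calc ∑ y1, W1 1 x2 y1 * Real.log (W1 1 x2 y1)
            = ∑ y1, W1 1 1 (σ y1) * Real.log (W1 1 1 (σ y1)) :=
              Finset.sum_congr rfl fun y1 _ => by rw [hσ y1]
          _ = _ := Equiv.sum_comp σ (fun y => W1 1 1 y * Real.log (W1 1 1 y))
      have hsplit : ∀ y1, W1 1 x2 y1 * Real.log (W1 1 x2 y1 * ((s1:ℝ)+2)) =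
          W1 1 x2 y1 * Real.log (W1 1 x2 y1) + W1 1 x2 y1 * Real.log ((s1:ℝ)+2) := by
        intro y1
        by_cases hw : W1 1 x2 y1 = 0
        · simp [hw]
        · rw [Real.log_mul hw (by positivity), mul_add]
      rw [Finset.sum_congr rfl fun y1 _ => hsplit y1, Finset.sum_add_distrib, hent,
        ← Finset.sum_mul, hW1sum 1 x2, one_mul]
      simp only [C2, ent]
      ring
    unfold condMI2
    rw [Finset.sum_eq_single (1 : Fin (r1+3))]
    · have hterm : ∀ (x2 : Fin (r2+3)) (y1 : Fin (s1+2)),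
          P 1 x2 * W1 1 x2 y1 *
            Real.log (W1 1 x2 y1 / ((∑ x2', P 1 x2' * W1 1 x2' y1) / marg1 P 1)) =
          P 1 x2 * W1 1 x2 y1 * Real.log (W1 1 x2 y1 * ((s1:ℝ)+2)) := by
        intro x2 y1
        rw [hden y1, hmarg1, div_one, div_eq_mul_inv, inv_inv]
      rw [Finset.sum_congr rfl fun x2 _ => Finset.sum_congr rfl fun y1 _ => hterm x2 y1]
      have hxx : ∀ x2 : Fin (r2+3),
          (∑ y1, P 1 x2 * W1 1 x2 y1 * Real.log (W1 1 x2 y1 * ((s1:ℝ)+2))) =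
          P 1 x2 * C2 W1 1 := by
        intro x2
        by_cases hx2 : x2 = 0
        · simp [hP, hx2]
        · have hPv : P 1 x2 = ((r2:ℝ)+2)⁻¹ := by simp [hP, hx2]
          rw [Finset.sum_congr rfl fun y1 _ => (mul_assoc (P 1 x2) _ _),
            ← Finset.mul_sum, hrow x2 hx2]
      rw [Finset.sum_congr rfl fun x2 _ => hxx x2, ← Finset.sum_mul]
      have : (∑ x2, P 1 x2) = 1 := hmarg1
      rw [this, one_mul]
    · intro b _ hb
      apply Finset.sum_eq_zero; intro x2 _
      apply Finset.sum_eq_zero; intro y1 _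
      simp [hP, hb]
    · simp
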